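/- Let X ⊆ ℝ^N be a convex set, g : ℝ^N → ℝ^M, and G : ℝ^N → Matrix (Fin M) (Fin N) ℝ such that for every y ∈ X, g has Jacobian G(y) within X at y. Assume constants 0 < σ_min ≤ σ_max < ∞ and ω > 0 such that for all y, y' ∈ X: σ_min‖v‖ ≤ ‖G(y)·v‖ for all v, ‖G(y)‖ ≤ σ_max, and ‖G(y) − G(y')‖ ≤ ω‖y − y'‖. Let x⋆ ∈ X satisfy G(x⋆)ᵀ·g(x⋆) = 0, set ε_min = ‖g(x⋆)‖, let α ∈ (0,1], and define d(x) = (G(x)ᵀG(x))⁻¹·G(x)ᵀ·g(x) for x ∈ X. Let P : ℝ^N → ℝ^N be a nonexpansive map (‖P(u) − P(v)‖ ≤ ‖u − v‖ for all u, v) with P(x⋆) = x⋆. Then for every x ∈ X and every vector d̃ ∈ ℝ^N: ‖P(x − α·d̃) − x⋆‖ ≤ T₁·‖x − x⋆‖² + T₂·‖x − x⋆‖ + α·‖d̃ − d(x)‖, where T₁ = α·ω/(2σ_min) and T₂ = (1−α)·σ_max/σ_min + √2·α·ω·ε_min/σ_min². -/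

import Mathlib

/-!
Write e = x - x⋆, A = G x and K = (AᵀA)⁻¹Aᵀ. Since KA = 1 and G(x⋆)ᵀ g(x⋆) = 0,
e - d(x) = K (g x⋆ - g x - A(x⋆ - x)) - (AᵀA)⁻¹ (A - G x⋆)ᵀ g x⋆.
The first term is a Taylor remainder, of size at most ω‖e‖²/2 because the Jacobian is
ω-Lipschitz; the lower bound σmin‖v‖ ≤ ‖Av‖ gives ‖K‖ ≤ 1/σmin and ‖(AᵀA)⁻¹‖ ≤ 1/σmin².
The relaxed step and the perturbation d̃ - d(x) then pass through P because P is
nonexpansive and fixes x⋆.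
-/

open Matrix

/-- Operator (spectral) 2-norm of a real matrix. -/
noncomputable def matOpNorm {m n : ℕ} (A : Matrix (Fin m) (Fin n) ℝ) : ℝ :=
  ‖LinearMap.toContinuousLinearMap (Matrix.toEuclideanLin A)‖

/-- Matrix-vector product as a map between Euclidean spaces. -/
noncomputable def matVec {m n : ℕ} (A : Matrix (Fin m) (Fin n) ℝ)
    (v : EuclideanSpace ℝ (Fin n)) : EuclideanSpace ℝ (Fin m) :=
  Matrix.toEuclideanLin A v

open scoped RealInnerProductSpace

section MatVec

variable {m n k : ℕ}

lemma matVec_mul (A : Matrix (Fin m) (Fin n) ℝ) (B : Matrix (Fin n) (Fin k) ℝ)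
    (v : EuclideanSpace ℝ (Fin k)) : matVec (A * B) v = matVec A (matVec B v) := by
  simp [matVec]

lemma matVec_one (v : EuclideanSpace ℝ (Fin n)) : matVec 1 v = v := by
  simp [matVec]

lemma matVec_sub_left (A B : Matrix (Fin m) (Fin n) ℝ) (v : EuclideanSpace ℝ (Fin n)) :
    matVec (A - B) v = matVec A v - matVec B v := by
  simp [matVec]

lemma matVec_sub_right (A : Matrix (Fin m) (Fin n) ℝ) (u v : EuclideanSpace ℝ (Fin n)) :
    matVec A (u - v) = matVec A u - matVec A v :=
  map_sub _ u v

lemma inner_matVec_transpose (A : Matrix (Fin m) (Fin n) ℝ) (u : EuclideanSpace ℝ (Fin m))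
    (v : EuclideanSpace ℝ (Fin n)) : ⟪matVec Aᵀ u, v⟫ = ⟪u, matVec A v⟫ := by
  rw [matVec, ← conjTranspose_eq_transpose_of_trivial, toEuclideanLin_conjTranspose_eq_adjoint,
    LinearMap.adjoint_inner_left]
  rfl

lemma norm_matVec_le (A : Matrix (Fin m) (Fin n) ℝ) (v : EuclideanSpace ℝ (Fin n)) :
    ‖matVec A v‖ ≤ matOpNorm A * ‖v‖ :=
  (LinearMap.toContinuousLinearMap (toEuclideanLin A)).le_opNorm v

-- `matOpNorm` is definitionally Mathlib's L2 operator norm on matrices.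
open scoped Matrix.Norms.L2Operator in
lemma matOpNorm_transpose (A : Matrix (Fin m) (Fin n) ℝ) : matOpNorm Aᵀ = matOpNorm A := by
  rw [← conjTranspose_eq_transpose_of_trivial]
  exact l2_opNorm_conjTranspose A

lemma norm_matVec_sq (A : Matrix (Fin m) (Fin n) ℝ) (v : EuclideanSpace ℝ (Fin n)) :
    ‖matVec A v‖ ^ 2 = ⟪matVec (Aᵀ * A) v, v⟫ := by
  rw [matVec_mul, inner_matVec_transpose, real_inner_self_eq_norm_sq]

end MatVec

section LeastSquares

variable {m n : ℕ} {A : Matrix (Fin m) (Fin n) ℝ} {σ : ℝ}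

lemma isUnit_det_transpose_mul_self (hσ : 0 < σ)
    (hA : ∀ v : EuclideanSpace ℝ (Fin n), σ * ‖v‖ ≤ ‖matVec A v‖) : IsUnit (Aᵀ * A).det := by
  have hker : LinearMap.ker A.mulVecLin = ⊥ := by
    refine LinearMap.ker_eq_bot'.mpr fun v hv => ?_
    have h := hA (WithLp.toLp 2 v)
    have hAv : matVec A (WithLp.toLp 2 v) = 0 := congrArg (WithLp.toLp 2) hv
    rw [hAv, norm_zero] at h
    have : ‖WithLp.toLp 2 v‖ = 0 := le_antisymm (nonpos_of_mul_nonpos_right h hσ) (norm_nonneg _)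
    simpa using this
  rw [← isUnit_iff_isUnit_det, ← mulVec_injective_iff_isUnit, ← coe_mulVecLin,
    ← LinearMap.ker_eq_bot, ker_mulVecLin_transpose_mul_self, hker]

lemma norm_le_of_matVec_gram_eq (hσ : 0 < σ)
    (hA : ∀ v : EuclideanSpace ℝ (Fin n), σ * ‖v‖ ≤ ‖matVec A v‖)
    {u z : EuclideanSpace ℝ (Fin n)} (h : matVec (Aᵀ * A) u = z) : σ ^ 2 * ‖u‖ ≤ ‖z‖ := by
  have hsq : σ ^ 2 * ‖u‖ ^ 2 ≤ ‖z‖ * ‖u‖ := calc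
    σ ^ 2 * ‖u‖ ^ 2 = (σ * ‖u‖) ^ 2 := by ring
    _ ≤ ‖matVec A u‖ ^ 2 := by gcongr; exact hA u
    _ = ⟪z, u⟫ := by rw [norm_matVec_sq, h]
    _ ≤ ‖z‖ * ‖u‖ := real_inner_le_norm z u
  rcases (norm_nonneg u).eq_or_lt with hu | hu
  · rw [← hu, mul_zero]; exact norm_nonneg z
  · nlinarith

lemma norm_matVec_le_of_matVec_gram_eq {u : EuclideanSpace ℝ (Fin n)}
    {w : EuclideanSpace ℝ (Fin m)} (h : matVec (Aᵀ * A) u = matVec Aᵀ w) :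
    ‖matVec A u‖ ≤ ‖w‖ := by
  have hsq : ‖matVec A u‖ ^ 2 ≤ ‖w‖ * ‖matVec A u‖ := calc
    ‖matVec A u‖ ^ 2 = ⟪w, matVec A u⟫ := by rw [norm_matVec_sq, h, inner_matVec_transpose]
    _ ≤ ‖w‖ * ‖matVec A u‖ := real_inner_le_norm _ _
  nlinarith [norm_nonneg (matVec A u), norm_nonneg w]

lemma norm_matVec_gram_inv_le (hσ : 0 < σ)
    (hA : ∀ v : EuclideanSpace ℝ (Fin n), σ * ‖v‖ ≤ ‖matVec A v‖) (z : EuclideanSpace ℝ (Fin n)) :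
    ‖matVec (Aᵀ * A)⁻¹ z‖ ≤ ‖z‖ / σ ^ 2 := by
  rw [le_div_iff₀' (by positivity)]
  refine norm_le_of_matVec_gram_eq hσ hA ?_
  rw [← matVec_mul, mul_nonsing_inv _ (isUnit_det_transpose_mul_self hσ hA), matVec_one]

lemma norm_matVec_pinv_le (hσ : 0 < σ)
    (hA : ∀ v : EuclideanSpace ℝ (Fin n), σ * ‖v‖ ≤ ‖matVec A v‖) (w : EuclideanSpace ℝ (Fin m)) :
    ‖matVec ((Aᵀ * A)⁻¹ * Aᵀ) w‖ ≤ ‖w‖ / σ := by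
  rw [le_div_iff₀' hσ]
  refine (hA _).trans (norm_matVec_le_of_matVec_gram_eq ?_)
  rw [← matVec_mul, ← Matrix.mul_assoc, mul_nonsing_inv _ (isUnit_det_transpose_mul_self hσ hA),
    Matrix.one_mul]

lemma norm_sub_sub_matVec_pinv_le {B : Matrix (Fin m) (Fin n) ℝ} (hσ : 0 < σ) (hA : ∀ v : EuclideanSpace ℝ (Fin n), σ * ‖v‖ ≤ ‖matVec A v‖)
    {x x₀ : EuclideanSpace ℝ (Fin n)} {r r₀ : EuclideanSpace ℝ (Fin m)} (hB : matVec Bᵀ r₀ = 0) :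
    ‖x - x₀ - matVec ((Aᵀ * A)⁻¹ * Aᵀ) r‖ ≤
      ‖r₀ - r - matVec A (x₀ - x)‖ / σ + matOpNorm (A - B) * ‖r₀‖ / σ ^ 2 := by
  set K := (Aᵀ * A)⁻¹ * Aᵀ
  have hKA : ∀ v, matVec K (matVec A v) = v := fun v => by
    rw [← matVec_mul, Matrix.mul_assoc, nonsing_inv_mul _ (isUnit_det_transpose_mul_self hσ hA),
      matVec_one]
  have hKr₀ : matVec K r₀ = matVec (Aᵀ * A)⁻¹ (matVec (A - B)ᵀ r₀) := by
    rw [transpose_sub, matVec_sub_left, hB, sub_zero, matVec_mul]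
  have hsplit : x - x₀ - matVec K r = matVec K (r₀ - r - matVec A (x₀ - x)) - matVec K r₀ := by
    rw [matVec_sub_right, matVec_sub_right, hKA]
    abel
  calc ‖x - x₀ - matVec K r‖
      ≤ ‖matVec K (r₀ - r - matVec A (x₀ - x))‖ + ‖matVec (Aᵀ * A)⁻¹ (matVec (A - B)ᵀ r₀)‖ := by
        rw [hsplit, hKr₀]
        exact norm_sub_le _ _
    _ ≤ ‖r₀ - r - matVec A (x₀ - x)‖ / σ + ‖matVec (A - B)ᵀ r₀‖ / σ ^ 2 :=
        add_le_add (norm_matVec_pinv_le hσ hA _) (norm_matVec_gram_inv_le hσ hA _)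
    _ ≤ ‖r₀ - r - matVec A (x₀ - x)‖ / σ + matOpNorm (A - B) * ‖r₀‖ / σ ^ 2 := by
        grw [norm_matVec_le, matOpNorm_transpose]

end LeastSquares

theorem Convex.norm_image_sub_sub_fderiv_le {E F : Type*} [NormedAddCommGroup E]
    [NormedSpace ℝ E] [NormedAddCommGroup F] [NormedSpace ℝ F] {s : Set E} (hs : Convex ℝ s)
    {f : E → F} {f' : E → E →L[ℝ] F} (hf : ∀ y ∈ s, HasFDerivWithinAt f (f' y) s y)
    {x y : E} {ω : ℝ} (hLip : ∀ z ∈ s, ‖f' z - f' x‖ ≤ ω * ‖z - x‖) (hx : x ∈ s) (hy : y ∈ s) :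
    ‖f y - f x - f' x (y - x)‖ ≤ ω / 2 * ‖y - x‖ ^ 2 := by
  set e := y - x
  set γ : ℝ → E := fun t => x + t • e
  have hγs : ∀ t ∈ Set.Icc (0 : ℝ) 1, γ t ∈ s := fun t ht => hs.add_smul_sub_mem hx hy ht
  set φ : ℝ → F := fun t => f (γ t) - f x - t • f' x e
  have hφ : ∀ t ∈ Set.Icc (0 : ℝ) 1,
      HasDerivWithinAt φ ((f' (γ t) - f' x) e) (Set.Icc 0 1) t := by
    intro t ht
    have hγ : HasDerivWithinAt γ e (Set.Icc 0 1) t :=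
      (((hasDerivAt_id t).smul_const e).const_add x).hasDerivWithinAt.congr_deriv (one_smul ℝ e)
    exact ((((hf _ (hγs t ht)).comp_hasDerivWithinAt t hγ hγs).sub_const (f x)).sub
      ((hasDerivAt_id t).smul_const (f' x e)).hasDerivWithinAt).congr_deriv (by simp)
  have hbound : ∀ t ∈ Set.Ico (0 : ℝ) 1, ‖(f' (γ t) - f' x) e‖ ≤ ω * ‖e‖ ^ 2 * t := by
    intro t ht
    calc ‖(f' (γ t) - f' x) e‖ ≤ ‖f' (γ t) - f' x‖ * ‖e‖ := ContinuousLinearMap.le_opNorm _ _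
      _ ≤ ω * ‖γ t - x‖ * ‖e‖ := by gcongr; exact hLip _ (hγs t (Set.Ico_subset_Icc_self ht))
      _ = ω * ‖e‖ ^ 2 * t := by
        simp only [γ, add_sub_cancel_left, norm_smul, Real.norm_eq_abs, abs_of_nonneg ht.1]
        ring
  have hB : ∀ t, HasDerivAt (fun t => ω * ‖e‖ ^ 2 / 2 * t ^ 2) (ω * ‖e‖ ^ 2 * t) t := fun t =>
    ((hasDerivAt_pow 2 t).const_mul (ω * ‖e‖ ^ 2 / 2)).congr_deriv (by simp; ring)
  have key := image_norm_le_of_norm_deriv_right_le_deriv_boundary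
    (fun t ht => (hφ t ht).continuousWithinAt)
    (fun t ht => (hφ t (Set.Ico_subset_Icc_self ht)).mono_of_mem_nhdsWithin
      (Icc_mem_nhdsGE_of_mem ht)) (by simp [φ, γ]) hB hbound (Set.right_mem_Icc.mpr zero_le_one)
  have hφ1 : φ 1 = f y - f x - f' x e := by simp [φ, γ, e]
  rw [← hφ1]
  exact key.trans_eq (by ring)

lemma norm_map_relaxed_step_sub_le {E : Type*} [NormedAddCommGroup E] [NormedSpace ℝ E]
    {P : E → E} (hP : ∀ u v, ‖P u - P v‖ ≤ ‖u - v‖) {x₀ : E} (hfix : P x₀ = x₀) {α : ℝ}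
    (hα0 : 0 ≤ α) (hα1 : α ≤ 1) (x d d' : E) :
    ‖P (x - α • d') - x₀‖ ≤ (1 - α) * ‖x - x₀‖ + α * ‖x - x₀ - d‖ + α * ‖d' - d‖ := by
  have hα1' : 0 ≤ 1 - α := sub_nonneg.mpr hα1
  calc ‖P (x - α • d') - x₀‖ = ‖P (x - α • d') - P x₀‖ := by rw [hfix]
    _ ≤ ‖x - α • d' - x₀‖ := hP _ _
    _ = ‖(1 - α) • (x - x₀) + α • (x - x₀ - d) - α • (d' - d)‖ := by congr 1; module
    _ ≤ (1 - α) * ‖x - x₀‖ + α * ‖x - x₀ - d‖ + α * ‖d' - d‖ := by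
      grw [norm_sub_le, norm_add_le]
      simp only [norm_smul, Real.norm_of_nonneg hα0, Real.norm_of_nonneg hα1', le_refl]

theorem perturbed_gauss_newton_recursion_general {N M : ℕ}
    (X : Set (EuclideanSpace ℝ (Fin N))) (hX : Convex ℝ X)
    (g : EuclideanSpace ℝ (Fin N) → EuclideanSpace ℝ (Fin M))
    (G : EuclideanSpace ℝ (Fin N) → Matrix (Fin M) (Fin N) ℝ)
    (hderiv : ∀ y ∈ X, HasFDerivWithinAt g
      (LinearMap.toContinuousLinearMap (Matrix.toEuclideanLin (G y))) X y)
    (σmin σmax ω : ℝ) (hσ0 : 0 < σmin) (hσσ : σmin ≤ σmax) (hω : 0 < ω)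
    (hlow : ∀ y ∈ X, ∀ v : EuclideanSpace ℝ (Fin N),
      σmin * ‖v‖ ≤ ‖matVec (G y) v‖)
    (hLip : ∀ y ∈ X, ∀ y' ∈ X, matOpNorm (G y - G y') ≤ ω * ‖y - y'‖)
    (xstar : EuclideanSpace ℝ (Fin N)) (hxstar : xstar ∈ X)
    (hfix : matVec (G xstar)ᵀ (g xstar) = 0)
    (εmin : ℝ) (hεmin : εmin = ‖g xstar‖)
    (α : ℝ) (hα0 : 0 < α) (hα1 : α ≤ 1)
    (d : EuclideanSpace ℝ (Fin N) → EuclideanSpace ℝ (Fin N))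
    (hd : ∀ x, d x = matVec (((G x)ᵀ * G x)⁻¹ * (G x)ᵀ) (g x))
    (P : EuclideanSpace ℝ (Fin N) → EuclideanSpace ℝ (Fin N))
    (hPne : ∀ u v, ‖P u - P v‖ ≤ ‖u - v‖)
    (hPfix : P xstar = xstar)
    (T₁ T₂ : ℝ)
    (hT₁ : T₁ = α * ω / (2 * σmin))
    (hT₂ : T₂ = (1 - α) * σmax / σmin + Real.sqrt 2 * α * ω * εmin / σmin ^ 2) :
    ∀ x ∈ X, ∀ dtil : EuclideanSpace ℝ (Fin N),
      ‖P (x - α • dtil) - xstar‖ ≤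
        T₁ * ‖x - xstar‖ ^ 2 + T₂ * ‖x - xstar‖ + α * ‖dtil - d x‖ := by
  intro x hx dtil
  have hG_lip : ∀ y ∈ X, ‖LinearMap.toContinuousLinearMap (toEuclideanLin (G y)) -
      LinearMap.toContinuousLinearMap (toEuclideanLin (G x))‖ ≤ ω * ‖y - x‖ := fun y hy => by
    rw [← map_sub, ← map_sub]
    exact hLip y hy x hx
  have htaylor : ‖g xstar - g x - matVec (G x) (xstar - x)‖ ≤ ω / 2 * ‖xstar - x‖ ^ 2 :=
    hX.norm_image_sub_sub_fderiv_le hderiv hG_lip hx hxstar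
  have hd_err : ‖x - xstar - d x‖ ≤
      ω / 2 * ‖x - xstar‖ ^ 2 / σmin + ω * ‖x - xstar‖ * εmin / σmin ^ 2 := by
    rw [hd, hεmin]
    refine (norm_sub_sub_matVec_pinv_le hσ0 (hlow x hx) hfix).trans ?_
    grw [htaylor, hLip x hx xstar hxstar, norm_sub_rev xstar x]
  have hσ_ratio : 1 ≤ σmax / σmin := (one_le_div hσ0).mpr hσσ
  have hsqrt2 : 1 ≤ Real.sqrt 2 := Real.one_le_sqrt.mpr one_le_two
  have hεmin0 : 0 ≤ εmin := hεmin ▸ norm_nonneg _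
  calc ‖P (x - α • dtil) - xstar‖
      ≤ (1 - α) * ‖x - xstar‖ + α * ‖x - xstar - d x‖ + α * ‖dtil - d x‖ :=
        norm_map_relaxed_step_sub_le hPne hPfix hα0.le hα1 x (d x) dtil
    _ ≤ (1 - α) * (‖x - xstar‖ * (σmax / σmin)) + α * (ω / 2 * ‖x - xstar‖ ^ 2 / σmin +
          ω * ‖x - xstar‖ * εmin / σmin ^ 2 * Real.sqrt 2) + α * ‖dtil - d x‖ := by
        grw [hd_err]
        gcongr
        · exact le_mul_of_one_le_right (norm_nonneg _) hσ_ratio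
        · exact le_mul_of_one_le_right (by positivity) hsqrt2
    _ = T₁ * ‖x - xstar‖ ^ 2 + T₂ * ‖x - xstar‖ + α * ‖dtil - d x‖ := by
        rw [hT₁, hT₂]
        ring

/-- Lemma 2 of the paper: perturbed error recursion
of the projected Gauss–Newton update with inexact descent d̃. -/
theorem perturbed_gauss_newton_recursion {N M : ℕ}
    (X : Set (EuclideanSpace ℝ (Fin N))) (hX : Convex ℝ X)
    (g : EuclideanSpace ℝ (Fin N) → EuclideanSpace ℝ (Fin M))
    (G : EuclideanSpace ℝ (Fin N) → Matrix (Fin M) (Fin N) ℝ)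
    (hderiv : ∀ y ∈ X, HasFDerivWithinAt g
      (LinearMap.toContinuousLinearMap (Matrix.toEuclideanLin (G y))) X y)
    (σmin σmax ω : ℝ) (hσ0 : 0 < σmin) (hσσ : σmin ≤ σmax) (hω : 0 < ω)
    (hlow : ∀ y ∈ X, ∀ v : EuclideanSpace ℝ (Fin N),
      σmin * ‖v‖ ≤ ‖matVec (G y) v‖)
    (hup : ∀ y ∈ X, matOpNorm (G y) ≤ σmax)
    (hLip : ∀ y ∈ X, ∀ y' ∈ X, matOpNorm (G y - G y') ≤ ω * ‖y - y'‖)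
    (xstar : EuclideanSpace ℝ (Fin N)) (hxstar : xstar ∈ X)
    (hfix : matVec (G xstar)ᵀ (g xstar) = 0)
    (εmin : ℝ) (hεmin : εmin = ‖g xstar‖)
    (α : ℝ) (hα0 : 0 < α) (hα1 : α ≤ 1)
    (d : EuclideanSpace ℝ (Fin N) → EuclideanSpace ℝ (Fin N))
    (hd : ∀ x, d x = matVec (((G x)ᵀ * G x)⁻¹ * (G x)ᵀ) (g x))
    (P : EuclideanSpace ℝ (Fin N) → EuclideanSpace ℝ (Fin N))
    (hPne : ∀ u v, ‖P u - P v‖ ≤ ‖u - v‖)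
    (hPfix : P xstar = xstar)
    (T₁ T₂ : ℝ)
    (hT₁ : T₁ = α * ω / (2 * σmin))
    (hT₂ : T₂ = (1 - α) * σmax / σmin + Real.sqrt 2 * α * ω * εmin / σmin ^ 2) :
    ∀ x ∈ X, ∀ dtil : EuclideanSpace ℝ (Fin N),
      ‖P (x - α • dtil) - xstar‖ ≤
        T₁ * ‖x - xstar‖ ^ 2 + T₂ * ‖x - xstar‖ + α * ‖dtil - d x‖ :=
  perturbed_gauss_newton_recursion_general X hX g G hderiv σmin σmax ω hσ0 hσσ hω hlow hLip xstar
    hxstar hfix εmin hεmin α hα0 hα1 d hd P hPne hPfix T₁ T₂ hT₁ hT₂
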